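/- For the 2-vertex IFS attractor (F_u, F_v) of Figure 1, if S : ℝ → ℝ is an orientation-preserving contracting similarity with ratio r ∈ (0,1) such that S(F_u) ⊆ F_v and S([0,1]) spans the level-1 gap of F_v (i.e., [c, c+g_v] ⊆ S([0,1])), then g_v < g_u. -/

import Mathlib

/-!
Let `M F` be the length of the largest open subinterval of `[0,1]` missing `F`. Splitting a gap
of `F_u` at the points `a, a + g_u ∈ F_u` shows `M F_u ≤ max g_u (a M F_u) (b M F_v)`, and
symmetrically `M F_v ≤ max g_v (c M F_v) (d M F_u)`. Pulling the gap `(c, c + g_v)` of `F_v` back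
along `S` gives a gap of `F_u` of length `g_v / r`, so `g_v ≤ r M F_u < M F_u`. Since all the
ratios are `< 1`, the two inequalities then only leave `M F_u ≤ g_u`.
-/

open Set

def gapLengths (F : Set ℝ) : Set ℝ :=
  {ℓ | ∃ x y, 0 ≤ x ∧ x ≤ y ∧ y ≤ 1 ∧ Disjoint (Ioo x y) F ∧ ℓ = y - x}

noncomputable def maxGap (F : Set ℝ) : ℝ := sSup (gapLengths F)

lemma bddAbove_gapLengths (F : Set ℝ) : BddAbove (gapLengths F) :=
  ⟨1, by rintro ℓ ⟨x, y, hx, -, hy, -, rfl⟩; linarith⟩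

lemma zero_mem_gapLengths (F : Set ℝ) : (0 : ℝ) ∈ gapLengths F :=
  ⟨0, 0, le_rfl, le_rfl, zero_le_one, by simp, by ring⟩

lemma le_maxGap {F : Set ℝ} {ℓ : ℝ} (h : ℓ ∈ gapLengths F) : ℓ ≤ maxGap F :=
  le_csSup (bddAbove_gapLengths F) h

lemma maxGap_le {F : Set ℝ} {M : ℝ} (h : ∀ ℓ ∈ gapLengths F, ℓ ≤ M) : maxGap F ≤ M :=
  csSup_le ⟨0, zero_mem_gapLengths F⟩ h

lemma sub_le_mul_maxGap {p q x y : ℝ} {G : Set ℝ} (hp : 0 < p) (hqx : q ≤ x) (hxy : x ≤ y)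
    (hy : y ≤ p + q) (hdisj : Disjoint (Ioo x y) ((fun z => p * z + q) '' G)) :
    y - x ≤ p * maxGap G := by
  have hmem : (y - x) / p ∈ gapLengths G := by
    refine ⟨(x - q) / p, (y - q) / p, div_nonneg (by linarith) hp.le, by gcongr,
      (div_le_one hp).2 (by linarith), ?_, by ring⟩
    refine disjoint_left.2 fun z ⟨hxz, hzy⟩ hzG => disjoint_left.1 hdisj ?_ ⟨z, hzG, rfl⟩
    rw [div_lt_iff₀ hp] at hxz
    rw [lt_div_iff₀ hp] at hzy
    constructor <;> linarith
  have := le_maxGap hmem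
  rwa [div_le_iff₀' hp] at this

section SelfSimilar

variable {a b g : ℝ} {F G : Set ℝ}

lemma disjoint_Ioo_of_eq_union (ha : 0 ≤ a) (hb : 0 ≤ b) (hF : F ⊆ Icc 0 1)
    (hG : G ⊆ Icc 0 1)
    (hinv : F = (fun x => a * x) '' F ∪ (fun x => b * x + (a + g)) '' G) :
    Disjoint (Ioo a (a + g)) F := by
  rw [disjoint_right, hinv]
  rintro _ (⟨z, hz, rfl⟩ | ⟨z, hz, rfl⟩) ⟨hlo, hhi⟩
  · nlinarith [(hF hz).2]
  · nlinarith [(hG hz).1]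

lemma maxGap_le_of_eq_union (ha : 0 < a) (hb : 0 < b) (hsum : a + g + b = 1)
    (hF1 : (1 : ℝ) ∈ F) (hG0 : (0 : ℝ) ∈ G)
    (hinv : F = (fun x => a * x) '' F ∪ (fun x => b * x + (a + g)) '' G) :
    maxGap F ≤ max g (max (a * maxGap F) (b * maxGap G)) := by
  refine maxGap_le ?_
  rintro _ ⟨x, y, hx, hxy, hy, hdisj, rfl⟩
  have hleft : (fun z => a * z) '' F ⊆ F := subset_union_left.trans hinv.symm.subset
  have hright : (fun z => b * z + (a + g)) '' G ⊆ F := subset_union_right.trans hinv.symm.subset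
  have haF : a ∉ Ioo x y := disjoint_right.1 hdisj (hleft ⟨1, hF1, mul_one a⟩)
  have hagF : a + g ∉ Ioo x y :=
    disjoint_right.1 hdisj (hright ⟨0, hG0, by simp⟩)
  rcases le_or_gt y a with hya | hay
  · have := sub_le_mul_maxGap (q := 0) ha (by linarith) hxy (by linarith)
      (by simpa only [add_zero] using hdisj.mono_right hleft)
    exact this.trans (le_max_of_le_right (le_max_left _ _))
  have hax : a ≤ x := not_lt.1 fun hxa => haF ⟨hxa, hay⟩
  rcases le_or_gt (a + g) x with hagx | hxag
  · have := sub_le_mul_maxGap hb hagx hxy (by linarith) (hdisj.mono_right hright)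
    exact this.trans (le_max_of_le_right (le_max_right _ _))
  · have hyag : y ≤ a + g := not_lt.1 fun hagy => hagF ⟨hxag, hagy⟩
    exact le_max_of_le_left (by linarith)

end SelfSimilar

lemma lt_of_mutual_max_bounds {a b c d gu gv mu mv : ℝ} (hb : 0 ≤ b) (ha1 : a < 1) (hb1 : b < 1)
    (hc1 : c < 1) (hd1 : d < 1) (hgv : 0 < gv) (hgvmu : gv < mu)
    (hmu : mu ≤ max gu (max (a * mu) (b * mv))) (hmv : mv ≤ max gv (max (c * mv) (d * mu))) :
    gv < gu := by
  have hmu0 : 0 < mu := hgv.trans hgvmu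
  rcases le_max_iff.1 hmu with hmu | hmu
  · linarith
  rcases le_max_iff.1 hmu with hmu | hmu
  · nlinarith
  rcases le_max_iff.1 hmv with hmv | hmv
  · nlinarith
  rcases le_max_iff.1 hmv with hmv | hmv
  · nlinarith
  · have hbd : b * d < 1 := by nlinarith
    nlinarith

theorem span_gap_cross_implies_general
    (a b c d gu gv : ℝ)
    (ha : 0 < a) (hb : 0 < b) (hc : 0 < c) (hd : 0 < d)
    (hgu : 0 < gu) (hgv : 0 < gv)
    (hsum1 : a + gu + b = 1) (hsum2 : c + gv + d = 1)
    (Fu Fv : Set ℝ)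
    (hFu0 : (0:ℝ) ∈ Fu) (hFu1 : (1:ℝ) ∈ Fu) (hFusub : Fu ⊆ Set.Icc 0 1)
    (hFv0 : (0:ℝ) ∈ Fv) (hFv1 : (1:ℝ) ∈ Fv) (hFvsub : Fv ⊆ Set.Icc 0 1)
    (hinvu : Fu = (fun x => a * x) '' Fu ∪ (fun x => b * x + (a + gu)) '' Fv)
    (hinvv : Fv = (fun x => c * x) '' Fv ∪ (fun x => d * x + (c + gv)) '' Fu)
    (r t : ℝ) (hr0 : 0 < r) (hr1 : r < 1)
    (hSF : (fun x => r * x + t) '' Fu ⊆ Fv)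
    (hspan : Set.Icc c (c + gv) ⊆ (fun x => r * x + t) '' Set.Icc 0 1) :
    gv < gu := by
  have hmu := maxGap_le_of_eq_union ha hb hsum1 hFu1 hFv0 hinvu
  have hmv := maxGap_le_of_eq_union hc hd hsum2 hFv1 hFu0 hinvv
  obtain ⟨x₀, ⟨hx₀, -⟩, hSx₀⟩ := hspan (left_mem_Icc.2 (by linarith))
  obtain ⟨x₁, ⟨-, hx₁⟩, hSx₁⟩ := hspan (right_mem_Icc.2 (by linarith))
  have hpullback : gv ≤ r * maxGap Fu := by
    have := sub_le_mul_maxGap hr0 (x := c) (y := c + gv)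
      (by nlinarith [hSx₀]) (by linarith) (by nlinarith [hSx₁])
      ((disjoint_Ioo_of_eq_union hc.le hd.le hFvsub hFusub hinvv).mono_right hSF)
    linarith
  have hmu0 : 0 < maxGap Fu := by nlinarith
  exact lt_of_mutual_max_bounds hb.le (by linarith) (by linarith) (by linarith) (by linarith)
    hgv (by nlinarith) hmu hmv

/-- If an orientation-preserving contracting similarity `S` maps `F_u` into `F_v` and
`S([0,1])` spans the level-1 gap `[c, c+g_v]` of `F_v`, then `g_v < g_u`. -/
theorem span_gap_cross_implies
    (a b c d gu gv : ℝ)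
    (ha : 0 < a) (hb : 0 < b) (hc : 0 < c) (hd : 0 < d)
    (hgu : 0 < gu) (hgv : 0 < gv)
    (hsum1 : a + gu + b = 1) (hsum2 : c + gv + d = 1)
    (Fu Fv : Set ℝ)
    (hFune : Fu.Nonempty) (hFucpt : IsCompact Fu)
    (hFvne : Fv.Nonempty) (hFvcpt : IsCompact Fv)
    (hFu0 : (0:ℝ) ∈ Fu) (hFu1 : (1:ℝ) ∈ Fu) (hFusub : Fu ⊆ Set.Icc 0 1)
    (hFv0 : (0:ℝ) ∈ Fv) (hFv1 : (1:ℝ) ∈ Fv) (hFvsub : Fv ⊆ Set.Icc 0 1)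
    (hinvu : Fu = (fun x => a * x) '' Fu ∪ (fun x => b * x + (a + gu)) '' Fv)
    (hinvv : Fv = (fun x => c * x) '' Fv ∪ (fun x => d * x + (c + gv)) '' Fu)
    (r t : ℝ) (hr0 : 0 < r) (hr1 : r < 1)
    (hSF : (fun x => r * x + t) '' Fu ⊆ Fv)
    (hspan : Set.Icc c (c + gv) ⊆ (fun x => r * x + t) '' Set.Icc 0 1) :
    gv < gu :=
  span_gap_cross_implies_general a b c d gu gv ha hb hc hd hgu hgv hsum1 hsum2 Fu Fv hFu0 hFu1
    hFusub hFv0 hFv1 hFvsub hinvu hinvv r t hr0 hr1 hSF hspan
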